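/- Let μ be a σ-finite measure on a measurable space Ω, let f, g : Ω → [0,∞) be measurable with ∫ f dμ = ∫ g dμ = 1, and let θ_1, θ_2 > 0. Then for every measurable set R ⊆ Ω, min{θ_1, θ_2}·(∫ √(f·g) dμ)² ≤ 2·(θ_1·∫_R f dμ + θ_2·∫_{Ω∖R} g dμ). -/

import Mathlib

/-!
Split the Bhattacharyya coefficient as `a + b` with `a = ∫_R √(fg)` and `b = ∫_{Rᶜ} √(fg)`.
By Cauchy–Schwarz on each piece, `a² ≤ (∫_R f)(∫_R g) ≤ ∫_R f` and `b² ≤ ∫_{Rᶜ} g`, since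
`g` and `f` have total mass one. Then `(a + b)² ≤ 2 (a² + b²)` gives the claim.
-/

open MeasureTheory Filter

lemma Real.sqrt_mul_le_abs_add_abs_div_two (x y : ℝ) : √(x * y) ≤ (|x| + |y|) / 2 := by
  calc √(x * y) ≤ √(|x| * |y|) := Real.sqrt_le_sqrt (abs_mul x y ▸ le_abs_self _)
    _ ≤ (|x| + |y|) / 2 := by
      rw [Real.sqrt_mul (abs_nonneg x)]
      nlinarith [Real.sq_sqrt (abs_nonneg x), Real.sq_sqrt (abs_nonneg y),
        sq_nonneg (√|x| - √|y|)]

lemma min_mul_add_sq_le {θ₁ θ₂ a b A B : ℝ} (hθ₁ : 0 ≤ θ₁) (hθ₂ : 0 ≤ θ₂)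
    (ha : a ^ 2 ≤ A) (hb : b ^ 2 ≤ B) :
    min θ₁ θ₂ * (a + b) ^ 2 ≤ 2 * (θ₁ * A + θ₂ * B) := by
  have hm : 0 ≤ min θ₁ θ₂ := le_min hθ₁ hθ₂
  have hA : 0 ≤ A := (sq_nonneg a).trans ha
  have hB : 0 ≤ B := (sq_nonneg b).trans hb
  calc min θ₁ θ₂ * (a + b) ^ 2 ≤ min θ₁ θ₂ * (2 * (A + B)) := by
        gcongr
        nlinarith [sq_nonneg (a - b)]
    _ ≤ 2 * (θ₁ * A + θ₂ * B) := by
        nlinarith [mul_le_mul_of_nonneg_right (min_le_left θ₁ θ₂) hA,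
          mul_le_mul_of_nonneg_right (min_le_right θ₁ θ₂) hB]

namespace MeasureTheory

variable {Ω : Type*} [MeasurableSpace Ω] {μ : Measure Ω} {f g : Ω → ℝ}

lemma Integrable.sqrt_mul (hf : Integrable f μ) (hg : Integrable g μ) :
    Integrable (fun ω => √(f ω * g ω)) μ := by
  refine ((hf.abs.add hg.abs).div_const 2).mono'
    (Real.continuous_sqrt.comp_aestronglyMeasurable
      (hf.aestronglyMeasurable.mul hg.aestronglyMeasurable)) (.of_forall fun ω => ?_)
  rw [Real.norm_of_nonneg (Real.sqrt_nonneg _)]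
  exact Real.sqrt_mul_le_abs_add_abs_div_two _ _

lemma Integrable.memLp_two_sqrt (hf : Integrable f μ) (hf0 : 0 ≤ᵐ[μ] f) :
    MemLp (fun ω => √(f ω)) 2 μ := by
  rw [memLp_two_iff_integrable_sq
    (Real.continuous_sqrt.comp_aestronglyMeasurable hf.aestronglyMeasurable)]
  refine hf.congr ?_
  filter_upwards [hf0] with ω hω
  exact (Real.sq_sqrt hω).symm

lemma integral_sqrt_mul_sq_le (hf : Integrable f μ) (hg : Integrable g μ)
    (hf0 : 0 ≤ᵐ[μ] f) (hg0 : 0 ≤ᵐ[μ] g) :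
    (∫ ω, √(f ω * g ω) ∂μ) ^ 2 ≤ (∫ ω, f ω ∂μ) * ∫ ω, g ω ∂μ := by
  have sqrt_rpow_two {h : Ω → ℝ} (h0 : 0 ≤ᵐ[μ] h) :
      ∫ ω, √(h ω) ^ (2 : ℝ) ∂μ = ∫ ω, h ω ∂μ := by
    refine integral_congr_ae ?_
    filter_upwards [h0] with ω hω
    rw [Real.rpow_two, Real.sq_sqrt hω]
  have holder := integral_mul_le_Lp_mul_Lq_of_nonneg Real.HolderConjugate.two_two
    (.of_forall fun ω => Real.sqrt_nonneg (f ω)) (.of_forall fun ω => Real.sqrt_nonneg (g ω))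
    (by simpa using hf.memLp_two_sqrt hf0) (by simpa using hg.memLp_two_sqrt hg0)
  have hfg : ∫ ω, √(f ω) * √(g ω) ∂μ = ∫ ω, √(f ω * g ω) ∂μ := by
    refine integral_congr_ae ?_
    filter_upwards [hf0] with ω hω
    exact (Real.sqrt_mul hω _).symm
  rw [hfg, sqrt_rpow_two hf0, sqrt_rpow_two hg0, ← Real.sqrt_eq_rpow,
    ← Real.sqrt_eq_rpow] at holder
  calc (∫ ω, √(f ω * g ω) ∂μ) ^ 2 ≤ (√(∫ ω, f ω ∂μ) * √(∫ ω, g ω ∂μ)) ^ 2 :=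
        pow_le_pow_left₀ (integral_nonneg fun ω => Real.sqrt_nonneg _) holder 2
    _ = (∫ ω, f ω ∂μ) * ∫ ω, g ω ∂μ := by
        rw [mul_pow, Real.sq_sqrt (integral_nonneg_of_ae hf0),
          Real.sq_sqrt (integral_nonneg_of_ae hg0)]

lemma setIntegral_sqrt_mul_sq_le (s : Set Ω) (hf : Integrable f μ) (hg : Integrable g μ)
    (hf0 : 0 ≤ᵐ[μ] f) (hg0 : 0 ≤ᵐ[μ] g) :
    (∫ ω in s, √(f ω * g ω) ∂μ) ^ 2 ≤ (∫ ω in s, f ω ∂μ) * ∫ ω, g ω ∂μ :=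
  (integral_sqrt_mul_sq_le hf.restrict hg.restrict (ae_restrict_of_ae hf0)
    (ae_restrict_of_ae hg0)).trans <|
    mul_le_mul_of_nonneg_left (setIntegral_le_integral hg hg0)
      (integral_nonneg_of_ae (ae_restrict_of_ae hf0))

end MeasureTheory

theorem min_mul_bhattacharyya_sq_le_general
    {Ω : Type*} [MeasurableSpace Ω] (μ : Measure Ω)
    (f g : Ω → ℝ)
    (hf0 : ∀ ω, 0 ≤ f ω) (hg0 : ∀ ω, 0 ≤ g ω)
    (hfi : ∫ ω, f ω ∂μ = 1) (hgi : ∫ ω, g ω ∂μ = 1)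
    (θ1 θ2 : ℝ) (hθ1 : 0 < θ1) (hθ2 : 0 < θ2)
    (R : Set Ω) (hR : MeasurableSet R) :
    min θ1 θ2 * (∫ ω, Real.sqrt (f ω * g ω) ∂μ) ^ 2
      ≤ 2 * (θ1 * (∫ ω in R, f ω ∂μ) + θ2 * (∫ ω in Rᶜ, g ω ∂μ)) := by
  have hfI : Integrable f μ := .of_integral_ne_zero (by simp [hfi])
  have hgI : Integrable g μ := .of_integral_ne_zero (by simp [hgi])
  have hR_bound : (∫ ω in R, √(f ω * g ω) ∂μ) ^ 2 ≤ ∫ ω in R, f ω ∂μ := by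
    simpa only [hgi, mul_one] using
      setIntegral_sqrt_mul_sq_le R hfI hgI (.of_forall hf0) (.of_forall hg0)
  have hRc_bound : (∫ ω in Rᶜ, √(f ω * g ω) ∂μ) ^ 2 ≤ ∫ ω in Rᶜ, g ω ∂μ := by
    simpa only [mul_comm (g _), hfi, mul_one] using
      setIntegral_sqrt_mul_sq_le Rᶜ hgI hfI (.of_forall hg0) (.of_forall hf0)
  rw [← integral_add_compl hR (hfI.sqrt_mul hgI)]
  exact min_mul_add_sq_le hθ1.le hθ2.le hR_bound hRc_bound

/-- For probability densities `f, g` w.r.t. a σ-finite measure `μ`, positive weights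
`θ₁, θ₂`, and any measurable set `R`,
`min{θ₁,θ₂}·(∫ √(f·g) dμ)² ≤ 2·(θ₁·∫_R f dμ + θ₂·∫_{Rᶜ} g dμ)`. -/
theorem min_mul_bhattacharyya_sq_le
    {Ω : Type*} [MeasurableSpace Ω] (μ : Measure Ω) [SigmaFinite μ]
    (f g : Ω → ℝ) (hf : Measurable f) (hg : Measurable g)
    (hf0 : ∀ ω, 0 ≤ f ω) (hg0 : ∀ ω, 0 ≤ g ω)
    (hfi : ∫ ω, f ω ∂μ = 1) (hgi : ∫ ω, g ω ∂μ = 1)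
    (θ1 θ2 : ℝ) (hθ1 : 0 < θ1) (hθ2 : 0 < θ2)
    (R : Set Ω) (hR : MeasurableSet R) :
    min θ1 θ2 * (∫ ω, Real.sqrt (f ω * g ω) ∂μ) ^ 2
      ≤ 2 * (θ1 * (∫ ω in R, f ω ∂μ) + θ2 * (∫ ω in Rᶜ, g ω ∂μ)) :=
  min_mul_bhattacharyya_sq_le_general μ f g hf0 hg0 hfi hgi θ1 θ2 hθ1 hθ2 R hR
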